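/- arXiv:2512.18282 — 3 statements merged into one kernel-verified Lean document; each statement's English description precedes it below -/
import Mathlib

section
/- Let n ≥ 1 be a natural number, let (a_k)_{k≥0} be a sequence of complex numbers, and let b_m = Σ_{k=0}^m C(m,k) a_k. Then: Σ_{k=1}^n C(n,k) a_k / (k + 1) = (1/(n+1)) · ( Σ_{m=1}^n b_m − n · b_0 ). -/
/-!
Summing the binomial transform over `m ≤ n` and exchanging the two sums turns the coefficient
of `a k` into `∑_{k ≤ m ≤ n} C(m, k) = C(n + 1, k + 1)` (hockey stick). On the other side,
`C(n, k) / (k + 1) = C(n + 1, k + 1) / (n + 1)`, so both sides are `1 / (n + 1)` times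
`∑_{k=1}^n C(n + 1, k + 1) a k`; the term `k = 0` accounts for `n · b 0`.
-/

open Finset

theorem sum_range_sum_range_choose_mul {R : Type*} [CommSemiring R] (a : ℕ → R) (n : ℕ) :
    ∑ m ∈ range (n + 1), ∑ k ∈ range (m + 1), (m.choose k : R) * a k =
      ∑ k ∈ range (n + 1), ((n + 1).choose (k + 1) : R) * a k := by
  rw [sum_comm' (t' := range (n + 1)) (s' := fun k ↦ Icc k n)
    (fun m k ↦ by simp only [mem_range, mem_Icc]; omega)]
  refine sum_congr rfl fun k _ ↦ ?_
  rw [← sum_mul, ← Nat.cast_sum, Nat.sum_Icc_choose]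

theorem sum_range_succ_eq_add_sum_Icc {M : Type*} [AddCommMonoid M] (f : ℕ → M) (n : ℕ) :
    ∑ k ∈ range (n + 1), f k = f 0 + ∑ k ∈ Icc 1 n, f k := by
  rw [range_eq_Ico, sum_eq_sum_Ico_succ_bot n.succ_pos]
  rfl

theorem cast_choose_div_add_one {K : Type*} [Field K] [CharZero K] (n k : ℕ) :
    (n.choose k : K) / (k + 1) = ((n + 1).choose (k + 1) : K) / (n + 1) := by
  rw [div_eq_div_iff (Nat.cast_add_one_ne_zero k) (Nat.cast_add_one_ne_zero n), mul_comm]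
  exact_mod_cast Nat.add_one_mul_choose_eq n k

theorem stmt_4_general (n : ℕ) (a b : ℕ → ℂ)
    (hb : ∀ m, b m = ∑ k ∈ Finset.range (m + 1), (Nat.choose m k : ℂ) * a k) :
    ∑ k ∈ Finset.Icc 1 n, (Nat.choose n k : ℂ) * a k / ((k : ℂ) + 1) =
      (1 / ((n : ℂ) + 1)) * ((∑ m ∈ Finset.Icc 1 n, b m) - (n : ℂ) * b 0) := by
  have hb0 : b 0 = a 0 := by simp [hb 0]
  have htransform := sum_range_sum_range_choose_mul a n
  simp only [← hb, sum_range_succ_eq_add_sum_Icc, Nat.choose_one_right, zero_add] at htransform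
  push_cast at htransform
  have hsum : ∑ m ∈ Icc 1 n, b m - n * b 0 =
      ∑ k ∈ Icc 1 n, ((n + 1).choose (k + 1) : ℂ) * a k := by
    linear_combination htransform - ((n : ℂ) + 1) * hb0
  rw [hsum, mul_sum]
  refine sum_congr rfl fun k _ ↦ ?_
  rw [mul_div_right_comm, cast_choose_div_add_one]
  ring

theorem stmt_4 (n : ℕ) (hn : 1 ≤ n) (a b : ℕ → ℂ)
    (hb : ∀ m, b m = ∑ k ∈ Finset.range (m + 1), (Nat.choose m k : ℂ) * a k) :
    ∑ k ∈ Finset.Icc 1 n, (Nat.choose n k : ℂ) * a k / ((k : ℂ) + 1) =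
      (1 / ((n : ℂ) + 1)) * ((∑ m ∈ Finset.Icc 1 n, b m) - (n : ℂ) * b 0) :=
  stmt_4_general n a b hb
end

section
/- For every natural number n ≥ 1: Σ_{k=0}^n C(n,k) 2^k H_k^− = −3^n · ( H_n(−1/3) − H_n(1/3) ), where H_k^− = Σ_{j=1}^k (−1)^{j−1}/j is the k-th skew-harmonic number. -/
open Finset

/-- The generalized harmonic number `H_n(α) = ∑_{k=1}^n α^k / k`. -/
noncomputable def genHarmonic (α : ℂ) (n : ℕ) : ℂ :=
  ∑ k ∈ Finset.Icc 1 n, α ^ k / (k : ℂ)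

/-- The skew-harmonic number `H_n^− = ∑_{k=1}^n (−1)^{k−1} / k`. -/
noncomputable def skewHarmonic (n : ℕ) : ℂ :=
  ∑ k ∈ Finset.Icc 1 n, (-1) ^ (k - 1) / (k : ℂ)

lemma genHarmonic_succ (α : ℂ) (n : ℕ) :
    genHarmonic α (n+1) = genHarmonic α n + α^(n+1) / ((n:ℂ)+1) := by
  unfold genHarmonic
  rw [Finset.sum_Icc_succ_top (by omega)]
  push_cast
  ring_nf

lemma skewHarmonic_succ (n : ℕ) :
    skewHarmonic (n+1) = skewHarmonic n + (-1)^n / ((n:ℂ)+1) := by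
  unfold skewHarmonic
  rw [Finset.sum_Icc_succ_top (by omega)]
  simp

lemma pascal_step (f : ℕ → ℂ) (n : ℕ) :
    ∑ k ∈ range (n+2), (((n+1).choose k : ℕ) : ℂ) * f k
      = ∑ k ∈ range (n+1), ((n.choose k : ℕ) : ℂ) * f k
        + ∑ k ∈ range (n+1), ((n.choose k : ℕ) : ℂ) * f (k+1) := by
  rw [Finset.sum_range_succ' (fun k => (((n+1).choose k : ℕ) : ℂ) * f k) (n+1)]
  simp only [Nat.choose_succ_succ, Nat.cast_add, add_mul, Finset.sum_add_distrib,
    Nat.choose_zero_right, Nat.cast_one, one_mul]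
  have h1 : ∑ k ∈ range (n+1), ((n.choose (k+1) : ℕ) : ℂ) * f (k+1) + f 0
      = ∑ k ∈ range (n+1), ((n.choose k : ℕ) : ℂ) * f k := by
    have := Finset.sum_range_succ' (fun k => ((n.choose k : ℕ) : ℂ) * f k) (n+1)
    rw [Finset.sum_range_succ (fun k => ((n.choose k : ℕ) : ℂ) * f k) (n+1)] at this
    simp [Nat.choose_succ_self] at this
    rw [this]
  linear_combination h1

lemma lemB (n : ℕ) :
    ∑ k ∈ range (n+1), ((n.choose k : ℕ) : ℂ) * (-2)^k / ((k:ℂ)+1)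
      = (1 - (-1)^(n+1)) / (2*((n:ℂ)+1)) := by
  have key : ∀ k : ℕ, ((n.choose k : ℕ) : ℂ) / ((k:ℂ)+1)
      = (((n+1).choose (k+1) : ℕ) : ℂ) / ((n:ℂ)+1) := by
    intro k
    have h := Nat.add_one_mul_choose_eq n k
    have h' : ((n:ℂ)+1) * (n.choose k : ℕ) = (((n+1).choose (k+1) : ℕ) : ℂ) * ((k:ℂ)+1) := by
      exact_mod_cast congrArg (Nat.cast : ℕ → ℂ) h
    have hk : ((k:ℂ)+1) ≠ 0 := Nat.cast_add_one_ne_zero k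
    have hn : ((n:ℂ)+1) ≠ 0 := Nat.cast_add_one_ne_zero n
    rw [div_eq_div_iff hk hn]
    linear_combination h'
  have hT : ∑ k ∈ range (n+1), (((n+1).choose (k+1) : ℕ) : ℂ) * (-2)^k
      = (1 - (-1)^(n+1))/2 := by
    have hpow : ((-1:ℂ))^(n+1) = ∑ j ∈ range (n+2), (-2:ℂ)^j * (((n+1).choose j : ℕ) : ℂ) := by
      have h := add_pow (-2:ℂ) 1 (n+1)
      norm_num at h
      exact h
    rw [Finset.sum_range_succ' (fun j => (-2:ℂ)^j * (((n+1).choose j : ℕ) : ℂ)) (n+1)] at hpow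
    simp only [pow_zero, Nat.choose_zero_right, Nat.cast_one, one_mul, mul_one] at hpow
    have h2 : ∑ k ∈ range (n+1), (-2:ℂ)^(k+1) * (((n+1).choose (k+1) : ℕ) : ℂ)
        = -2 * ∑ k ∈ range (n+1), (((n+1).choose (k+1) : ℕ) : ℂ) * (-2)^k := by
      rw [Finset.mul_sum]; exact Finset.sum_congr rfl fun k _ => by ring
    linear_combination (1/2 : ℂ) * hpow + (1/2 : ℂ) * h2
  calc ∑ k ∈ range (n+1), ((n.choose k : ℕ) : ℂ) * (-2)^k / ((k:ℂ)+1)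
      = ∑ k ∈ range (n+1), (((n+1).choose (k+1) : ℕ) : ℂ) * (-2)^k / ((n:ℂ)+1) := by
        refine Finset.sum_congr rfl fun k _ => ?_
        have h1 : ((n.choose k : ℕ) : ℂ) * (-2)^k / ((k:ℂ)+1)
            = ((n.choose k : ℕ) : ℂ) / ((k:ℂ)+1) * (-2)^k := by ring
        rw [h1, key k]; ring
    _ = (∑ k ∈ range (n+1), (((n+1).choose (k+1) : ℕ) : ℂ) * (-2)^k) / ((n:ℂ)+1) := by
        rw [Finset.sum_div]
    _ = (1 - (-1)^(n+1)) / (2*((n:ℂ)+1)) := by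
        rw [hT]
        have hn : ((n:ℂ)+1) ≠ 0 := Nat.cast_add_one_ne_zero n
        field_simp

lemma main_all (n : ℕ) :
    ∑ k ∈ Finset.range (n + 1), (Nat.choose n k : ℂ) * 2 ^ k * skewHarmonic k =
      -3 ^ n * (genHarmonic (-1 / 3) n - genHarmonic (1 / 3) n) := by
  induction n with
  | zero => simp [genHarmonic, skewHarmonic]
  | succ n ih =>
    have hL : ∑ k ∈ range (n+2), (((n+1).choose k : ℕ) : ℂ) * 2^k * skewHarmonic k
        = 3 * (∑ k ∈ range (n+1), ((n.choose k : ℕ) : ℂ) * 2^k * skewHarmonic k)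
          + 2 * ∑ k ∈ range (n+1), ((n.choose k : ℕ) : ℂ) * (-2)^k / ((k:ℂ)+1) := by
      have hp := pascal_step (fun k => (2:ℂ)^k * skewHarmonic k) n
      have h2 : ∑ k ∈ range (n+1), ((n.choose k : ℕ) : ℂ) * ((2:ℂ)^(k+1) * skewHarmonic (k+1))
          = 2 * (∑ k ∈ range (n+1), ((n.choose k : ℕ) : ℂ) * ((2:ℂ)^k * skewHarmonic k))
            + 2 * ∑ k ∈ range (n+1), ((n.choose k : ℕ) : ℂ) * (-2)^k / ((k:ℂ)+1) := by
        rw [Finset.mul_sum, Finset.mul_sum, ← Finset.sum_add_distrib]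
        refine Finset.sum_congr rfl fun k _ => ?_
        rw [skewHarmonic_succ]
        have hneg : ((-2:ℂ))^k = (-1)^k * 2^k := by
          rw [show ((-2:ℂ)) = (-1) * 2 by norm_num, mul_pow]
        rw [hneg]
        have hk : ((k:ℂ)+1) ≠ 0 := Nat.cast_add_one_ne_zero k
        field_simp
        ring
      calc ∑ k ∈ range (n+2), (((n+1).choose k : ℕ) : ℂ) * 2^k * skewHarmonic k
          = ∑ k ∈ range (n+2), (((n+1).choose k : ℕ) : ℂ) * ((2:ℂ)^k * skewHarmonic k) := by
            simp [mul_assoc]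
        _ = ∑ k ∈ range (n+1), ((n.choose k : ℕ) : ℂ) * ((2:ℂ)^k * skewHarmonic k)
            + ∑ k ∈ range (n+1), ((n.choose k : ℕ) : ℂ) * ((2:ℂ)^(k+1) * skewHarmonic (k+1)) := hp
        _ = _ := by
            rw [h2]
            simp only [mul_assoc]
            ring
    have hn' : ((n:ℂ)+1) ≠ 0 := Nat.cast_add_one_ne_zero n
    have hB : (2:ℂ) * ((1 - (-1)^(n+1)) / (2*((n:ℂ)+1))) = (1 - (-1)^(n+1)) / ((n:ℂ)+1) := by
      field_simp
    rw [hL, lemB, hB, ih, genHarmonic_succ, genHarmonic_succ]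
    have h3 : (3:ℂ)^(n+1) * ((1:ℂ)/3)^(n+1) = 1 := by rw [← mul_pow]; norm_num
    have h4 : (3:ℂ)^(n+1) * ((-1:ℂ)/3)^(n+1) = (-1)^(n+1) := by
      rw [← mul_pow]; norm_num
    linear_combination (1/((n:ℂ)+1)) * h4 - (1/((n:ℂ)+1)) * h3

theorem stmt_11 (n : ℕ) (hn : 1 ≤ n) :
    ∑ k ∈ Finset.range (n + 1), (Nat.choose n k : ℂ) * 2 ^ k * skewHarmonic k =
      -3 ^ n * (genHarmonic (-1 / 3) n - genHarmonic (1 / 3) n) := by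
  exact main_all n
end

section
/- Let (a_k)_{k≥0} be a sequence of complex numbers and let b_m = Σ_{k=0}^m C(m,k) a_k be its binomial transform. Then for all natural numbers n and p (with the convention 0^0 = 1): Σ_{k=0}^n C(n,k) k^p a_k = Σ_{l=0}^p Σ_{j=0}^p (−1)^l C(n,l) C(n−l, j−l) · j! · S(p,j) · b_{n−l}, where S(p,j) denotes the Stirling number of the second kind. (Terms with l > n vanish because C(n,l) = 0.) -/
open Finset

/-- Stirling numbers of the second kind: `stirling2 p j` is the number of partitions of a
`p`-element set into `j` nonempty blocks. -/
def stirling2 : ℕ → ℕ → ℕ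
  | 0, 0 => 1
  | 0, _ + 1 => 0
  | _ + 1, 0 => 0
  | p + 1, j + 1 => (j + 1) * stirling2 p (j + 1) + stirling2 p j

lemma stirling2_eq_zero : ∀ p j, p < j → stirling2 p j = 0
  | 0, 0, h => by omega
  | 0, j + 1, _ => rfl
  | p + 1, 0, h => by omega
  | p + 1, j + 1, h => by
      rw [stirling2, stirling2_eq_zero p (j+1) (by omega), stirling2_eq_zero p j (by omega)]
      simp

lemma mul_descFactorial (k j : ℕ) :
    k * k.descFactorial j = k.descFactorial (j+1) + j * k.descFactorial j := by
  rcases le_or_gt j k with h | h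
  · rw [Nat.descFactorial_succ, Nat.sub_mul]
    have : j * k.descFactorial j ≤ k * k.descFactorial j :=
      Nat.mul_le_mul_right _ h
    omega
  · rw [Nat.descFactorial_eq_zero_iff_lt.2 h,
      Nat.descFactorial_eq_zero_iff_lt.2 (by omega)]
    simp

lemma pow_eq_sum_stirling (k : ℕ) : ∀ p : ℕ,
    k ^ p = ∑ j ∈ range (p+1), stirling2 p j * k.descFactorial j := by
  intro p
  induction p with
  | zero => simp [stirling2]
  | succ p ih =>
    have : k ^ (p+1) = ∑ j ∈ range (p+1), stirling2 p j * (k * k.descFactorial j) := by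
      rw [pow_succ, ih, Finset.sum_mul]
      exact Finset.sum_congr rfl fun j _ => by ring
    rw [this]
    have h1 : ∀ j, stirling2 p j * (k * k.descFactorial j)
        = stirling2 p j * k.descFactorial (j+1) + j * stirling2 p j * k.descFactorial j := by
      intro j; rw [mul_descFactorial]; ring
    rw [Finset.sum_congr rfl fun j _ => h1 j, Finset.sum_add_distrib]
    -- RHS: peel j=0 (zero), shift
    rw [Finset.sum_range_succ' (fun j => stirling2 (p+1) j * k.descFactorial j) (p+1)]
    have h0 : stirling2 (p+1) 0 * k.descFactorial 0 = 0 := by simp [stirling2]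
    rw [h0, add_zero]
    have h2 : ∀ i, stirling2 (p+1) (i+1) * k.descFactorial (i+1)
        = (i+1) * stirling2 p (i+1) * k.descFactorial (i+1)
          + stirling2 p i * k.descFactorial (i+1) := by
      intro i; rw [stirling2]; ring
    rw [Finset.sum_congr rfl fun i _ => h2 i, Finset.sum_add_distrib, add_comm]
    congr 1
    · -- ∑_{j∈range(p+1)} j * S p j * desc j = ∑_{i∈range(p+1)} (i+1) S p (i+1) desc (i+1)
      rw [Finset.sum_range_succ' (fun j => j * stirling2 p j * k.descFactorial j) p]
      rw [Finset.sum_range_succ (fun i => (i+1) * stirling2 p (i+1) * k.descFactorial (i+1)) p]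
      rw [stirling2_eq_zero p (p+1) (by omega)]
      simp

lemma claimC : ∀ m n j : ℕ, m ≤ n →
    ∑ l ∈ range (j+1), (-1:ℤ)^l * (Nat.choose m l) * (Nat.choose (n-l) (j-l))
      = (Nat.choose (n-m) j : ℤ) := by
  intro m
  induction m with
  | zero =>
    intro n j _
    rw [Finset.sum_eq_single 0]
    · simp
    · intro l _ hl
      rcases Nat.exists_eq_succ_of_ne_zero hl with ⟨i, rfl⟩
      simp
    · intro h; exact absurd (Finset.mem_range.2 (by omega)) h
  | succ m ih =>
    intro n j hmn
    match j with
    | 0 => simp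
    | j + 1 =>
      rw [Finset.sum_range_succ'
        (fun l => (-1:ℤ)^l * (Nat.choose (m+1) l) * (Nat.choose (n-l) (j+1-l))) (j+1)]
      have hsplit : ∀ i ∈ range (j+1),
          (-1:ℤ)^(i+1) * (Nat.choose (m+1) (i+1)) * (Nat.choose (n-(i+1)) (j+1-(i+1)))
          = (-1:ℤ)^(i+1) * (Nat.choose m (i+1)) * (Nat.choose (n-(i+1)) (j+1-(i+1)))
            + (-((-1:ℤ)^i * (Nat.choose m i) * (Nat.choose ((n-1)-i) (j-i)))) := by
        intro i _
        have h1 : n - (i+1) = (n-1) - i := by omega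
        have h2 : j + 1 - (i+1) = j - i := by omega
        rw [Nat.choose_succ_succ m i, h1, h2]
        push_cast
        ring
      rw [Finset.sum_congr rfl hsplit, Finset.sum_add_distrib]
      have hA : (∑ i ∈ range (j+1),
          (-1:ℤ)^(i+1) * (Nat.choose m (i+1)) * (Nat.choose (n-(i+1)) (j+1-(i+1))))
          + (-1:ℤ)^0 * (Nat.choose (m+1) 0) * (Nat.choose (n-0) (j+1-0))
          = ((n-m).choose (j+1) : ℤ) := by
        have := ih n (j+1) (by omega)
        rw [Finset.sum_range_succ'
          (fun l => (-1:ℤ)^l * (Nat.choose m l) * (Nat.choose (n-l) (j+1-l))) (j+1)] at this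
        simp only [Nat.choose_zero_right] at this ⊢
        convert this using 2 <;> simp
      have hB : (∑ i ∈ range (j+1),
          -((-1:ℤ)^i * (Nat.choose m i) * (Nat.choose ((n-1)-i) (j-i))))
          = -(((n-1)-m).choose j : ℤ) := by
        rw [Finset.sum_neg_distrib, ih (n-1) j (by omega)]
      rw [add_right_comm, hA, hB]
      have h3 : n - m = (n - (m+1)) + 1 := by omega
      have h4 : (n-1) - m = n - (m+1) := by omega
      rw [h3, h4, Nat.choose_succ_succ]
      push_cast
      ring

lemma trinom (n k l : ℕ) (h : k ≤ n) :
    Nat.choose n l * Nat.choose (n-l) k = Nat.choose n k * Nat.choose (n-k) l := by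
  rcases le_or_gt (l + k) n with hln | hln
  · have h1 := Nat.choose_mul (n := n) (show l ≤ l + k by omega)
    have h2 := Nat.choose_mul (n := n) (show k ≤ l + k by omega)
    have h3 : (l+k).choose l = (l+k).choose k := Nat.choose_symm_add
    simp only [Nat.add_sub_cancel_left, Nat.add_sub_cancel] at h1 h2
    rw [← h1, h3, h2]
  · rcases le_or_gt l n with hl | hl
    · rw [Nat.choose_eq_zero_of_lt (show n - l < k by omega),
        Nat.choose_eq_zero_of_lt (show n - k < l by omega)]
      ring
    · rw [Nat.choose_eq_zero_of_lt hl,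
        Nat.choose_eq_zero_of_lt (show n - k < l by omega)]
      ring

lemma claimB (n k j : ℕ) (h : k ≤ n) :
    ∑ l ∈ range (j+1), (-1:ℤ)^l * (Nat.choose n l) * (Nat.choose (n-l) (j-l)) * (Nat.choose (n-l) k)
      = (Nat.choose n k : ℤ) * (Nat.choose k j) := by
  have step : ∀ l, (-1:ℤ)^l * (Nat.choose n l) * (Nat.choose (n-l) (j-l)) * (Nat.choose (n-l) k)
      = (Nat.choose n k : ℤ) * ((-1:ℤ)^l * (Nat.choose (n-k) l) * (Nat.choose (n-l) (j-l))) := by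
    intro l
    have := trinom n k l h
    have : (Nat.choose n l : ℤ) * (Nat.choose (n-l) k) = (Nat.choose n k : ℤ) * (Nat.choose (n-k) l) := by
      exact_mod_cast congrArg (Nat.cast : ℕ → ℤ) this
    linear_combination ((-1:ℤ)^l * ((Nat.choose (n-l) (j-l)) : ℤ)) * this
  rw [Finset.sum_congr rfl fun l _ => step l, ← Finset.mul_sum,
    claimC (n-k) n j (by omega), Nat.sub_sub_self h]

theorem stmt_16 (a b : ℕ → ℂ)
    (hb : ∀ m, b m = ∑ k ∈ Finset.range (m + 1), (Nat.choose m k : ℂ) * a k)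
    (n p : ℕ) :
    ∑ k ∈ Finset.range (n + 1), (Nat.choose n k : ℂ) * (k : ℂ) ^ p * a k =
      ∑ l ∈ Finset.range (p + 1), ∑ j ∈ Finset.range (p + 1),
        (-1) ^ l * (Nat.choose n l : ℂ) *
          (if l ≤ j then (Nat.choose (n - l) (j - l) : ℂ) else 0) *
          (Nat.factorial j : ℂ) * (stirling2 p j : ℂ) * b (n - l) := by
  -- extend b (n - l) to a sum over range (n+1), absorbing choose n l
  have hbext : ∀ l : ℕ, (Nat.choose n l : ℂ) * b (n - l) =
      (Nat.choose n l : ℂ) * ∑ k ∈ range (n + 1), (Nat.choose (n - l) k : ℂ) * a k := by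
    intro l
    rcases le_or_gt l n with hl | hl
    · congr 1
      rw [hb]
      apply Finset.sum_subset
      · exact Finset.range_subset_range.2 (by omega)
      · intro k hk hk2
        simp only [Finset.mem_range] at hk hk2
        rw [Nat.choose_eq_zero_of_lt (show n - l < k by omega)]
        simp
    · rw [Nat.choose_eq_zero_of_lt hl]
      simp
  -- rewrite RHS termwise
  have step1 : ∀ l ∈ range (p+1), ∀ j ∈ range (p+1),
      (-1:ℂ) ^ l * (Nat.choose n l : ℂ) *
          (if l ≤ j then (Nat.choose (n - l) (j - l) : ℂ) else 0) *
          (Nat.factorial j : ℂ) * (stirling2 p j : ℂ) * b (n - l)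
      = ∑ k ∈ range (n+1),
          ((-1:ℂ) ^ l * (Nat.choose n l : ℂ) *
            (if l ≤ j then (Nat.choose (n - l) (j - l) : ℂ) else 0) *
            (Nat.choose (n - l) k : ℂ)) *
          ((Nat.factorial j : ℂ) * (stirling2 p j : ℂ) * a k) := by
    intro l _ j _
    have h1 : (-1:ℂ) ^ l * (Nat.choose n l : ℂ) *
          (if l ≤ j then (Nat.choose (n - l) (j - l) : ℂ) else 0) *
          (Nat.factorial j : ℂ) * (stirling2 p j : ℂ) * b (n - l)
        = ((-1:ℂ) ^ l * (if l ≤ j then (Nat.choose (n - l) (j - l) : ℂ) else 0) *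
          (Nat.factorial j : ℂ) * (stirling2 p j : ℂ)) * ((Nat.choose n l : ℂ) * b (n - l)) := by
      ring
    rw [h1, hbext l, Finset.mul_sum, Finset.mul_sum]
    exact Finset.sum_congr rfl fun k _ => by ring
  rw [Finset.sum_congr rfl fun l hl => Finset.sum_congr rfl fun j hj => step1 l hl j hj]
  -- swap sums: l j k -> k j l
  rw [Finset.sum_comm]
  rw [Finset.sum_congr rfl fun j _ => Finset.sum_comm]
  rw [Finset.sum_comm]
  -- now RHS = ∑ k ∑ j ∑ l
  apply Finset.sum_congr rfl
  intro k hk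
  have hkn : k ≤ n := by simpa using Nat.lt_succ_iff.mp (Finset.mem_range.mp hk)
  -- inner l-sum
  have hinner : ∀ j ∈ range (p+1),
      (∑ l ∈ range (p+1),
        ((-1:ℂ) ^ l * (Nat.choose n l : ℂ) *
          (if l ≤ j then (Nat.choose (n - l) (j - l) : ℂ) else 0) *
          (Nat.choose (n - l) k : ℂ)) *
        ((Nat.factorial j : ℂ) * (stirling2 p j : ℂ) * a k))
      = ((Nat.choose n k : ℂ) * (Nat.choose k j : ℂ)) *
        ((Nat.factorial j : ℂ) * (stirling2 p j : ℂ) * a k) := by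
    intro j hj
    rw [← Finset.sum_mul]
    congr 1
    have hjp : j + 1 ≤ p + 1 := by simp at hj; omega
    have hsub : ∑ l ∈ range (p+1),
        ((-1:ℂ) ^ l * (Nat.choose n l : ℂ) *
          (if l ≤ j then (Nat.choose (n - l) (j - l) : ℂ) else 0) *
          (Nat.choose (n - l) k : ℂ))
        = ∑ l ∈ range (j+1),
          ((-1:ℂ) ^ l * (Nat.choose n l : ℂ) * (Nat.choose (n - l) (j - l) : ℂ) *
          (Nat.choose (n - l) k : ℂ)) := by
      rw [← Finset.sum_subset (Finset.range_subset_range.2 hjp)]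
      · apply Finset.sum_congr rfl
        intro l hl
        have : l ≤ j := by simp at hl; omega
        rw [if_pos this]
      · intro l _ hl2
        have : ¬ l ≤ j := by simp at hl2; omega
        rw [if_neg this]
        ring
    rw [hsub]
    have := claimB n k j hkn
    have hc := congrArg (Int.cast : ℤ → ℂ) this
    push_cast at hc
    convert hc using 1
  rw [Finset.sum_congr rfl hinner]
  -- now need: C(n,k) * k^p * a k = ∑ j C(n,k) C(k,j) * (j! * S p j * a k)
  have hkp : (k : ℂ) ^ p = ∑ j ∈ range (p+1), (stirling2 p j : ℂ) * (Nat.factorial j : ℂ) * (Nat.choose k j : ℂ) := by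
    have h := pow_eq_sum_stirling k p
    have hc := congrArg (Nat.cast : ℕ → ℂ) h
    push_cast at hc
    rw [hc]
    apply Finset.sum_congr rfl
    intro j _
    rw [Nat.descFactorial_eq_factorial_mul_choose]
    push_cast
    ring
  rw [hkp, Finset.mul_sum, Finset.sum_mul]
  apply Finset.sum_congr rfl
  intro j _
  ring
end
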